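/- arXiv:2405.13625 — 4 statements merged into one kernel-verified Lean document; each statement's English description precedes it below -/
import Mathlib

section
/- Let X be an n×n real positive semidefinite symmetric matrix in block form X = [[S, Rᵀ],[R, W]] with S an r×r block, and suppose the first r columns of X are a maximal linearly independent set of columns. Then, with Y = -S⁻¹Rᵀ, the matrix product X · [[Y],[I_{n-r}]] equals the n×(n-r) zero matrix. -/
open Matrix

/-- Block PSD matrix `X = [[S, Rᵀ],[R, W]]` whose first `r` columns are a maximal
linearly independent set of columns; with `Y = -S⁻¹Rᵀ`, one has `X · [[Y],[I]] = 0`. -/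
theorem stmt1 {r m : ℕ} (X : Matrix (Fin r ⊕ Fin m) (Fin r ⊕ Fin m) ℝ)
    (hX : X.PosSemidef)
    (hind : LinearIndependent ℝ (fun j : Fin r => fun i => X i (Sum.inl j)))
    (hspan : ∀ j : Fin r ⊕ Fin m,
      (fun i => X i j) ∈
        Submodule.span ℝ (Set.range (fun j : Fin r => fun i => X i (Sum.inl j)))) :
    X * Matrix.fromRows (-(Matrix.toBlocks₁₁ X)⁻¹ * (Matrix.toBlocks₂₁ X)ᵀ)
        (1 : Matrix (Fin m) (Fin m) ℝ) = 0 := by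
  classical
  -- Symmetry of X
  have hsym : ∀ i j, X j i = X i j := fun i j => by
    have := hX.isHermitian.apply i j
    simpa using this
  -- Choose coefficient matrix C with columns of the right block expressed via left block
  have hC : ∀ j : Fin m, ∃ c : Fin r → ℝ,
      ∀ i, X i (Sum.inr j) = ∑ k, c k * X i (Sum.inl k) := by
    intro j
    obtain ⟨c, hc⟩ := (Finsupp.mem_span_range_iff_exists_finsupp).1 (hspan (Sum.inr j))
    refine ⟨fun k => c k, fun i => ?_⟩
    rw [Finsupp.sum_fintype _ _ (by simp)] at hc
    have := congrFun hc i
    rw [Finset.sum_apply] at this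
    rw [← this]
    simp
  choose C hCspec using hC
  set Cmat : Matrix (Fin r) (Fin m) ℝ := Matrix.of (fun k j => C j k) with hCmat
  set S := Matrix.toBlocks₁₁ X with hS
  set R := Matrix.toBlocks₂₁ X with hR
  -- S is a unit
  have hSps : S.PosSemidef := hX.submatrix Sum.inl
  have hSunit : IsUnit S := by
    rw [← Matrix.mulVec_injective_iff_isUnit]
    have hker : ∀ v, S *ᵥ v = 0 → v = 0 := by
      intro v hv
      set u : Fin r ⊕ Fin m → ℝ := Sum.elim v 0 with hu
      have hXu : X *ᵥ u = 0 := by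
        rw [← hX.dotProduct_mulVec_zero_iff]
        have h1 : X *ᵥ u = fun i => ∑ k, v k * X i (Sum.inl k) := by
          funext i
          simp [Matrix.mulVec, dotProduct, hu, Fintype.sum_sum_type, mul_comm]
        have h2 : star u ⬝ᵥ X *ᵥ u = v ⬝ᵥ (S *ᵥ v) := by
          rw [h1]
          simp only [dotProduct, Matrix.mulVec, hu, Fintype.sum_sum_type, hS,
            Matrix.toBlocks₁₁, Finset.mul_sum, Sum.elim_inl, Sum.elim_inr, star_trivial,
            Matrix.of_apply, mul_zero, Finset.sum_const_zero, add_zero, zero_mul, Pi.zero_apply]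
          exact Finset.sum_congr rfl fun a _ => Finset.sum_congr rfl fun b _ => by ring
        rw [h2, hv, dotProduct_zero]
      have hcomb : ∑ k, v k • (fun i => X i (Sum.inl k)) = 0 := by
        funext i
        have := congrFun hXu i
        simp only [Matrix.mulVec, dotProduct, hu, Fintype.sum_sum_type,
          Sum.elim_inl, Sum.elim_inr, mul_zero, Finset.sum_const_zero, add_zero,
          Pi.zero_apply] at this ⊢
        simp only [Finset.sum_apply, Pi.smul_apply, smul_eq_mul]
        rw [← this]
        exact Finset.sum_congr rfl fun k _ => mul_comm _ _
      funext k
      exact Fintype.linearIndependent_iff.1 hind v hcomb k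
    intro v w hvw
    have : S *ᵥ (v - w) = 0 := by rw [Matrix.mulVec_sub, hvw, sub_self]
    have := hker _ this
    exact sub_eq_zero.1 this
  -- Block identities
  have hRT : Rᵀ = S * Cmat := by
    ext i j
    simp only [Matrix.transpose_apply, hR, Matrix.toBlocks₂₁, Matrix.mul_apply,
      Matrix.of_apply, hS, Matrix.toBlocks₁₁, hCmat]
    rw [hsym (Sum.inl i) (Sum.inr j), hCspec j (Sum.inl i)]
    exact Finset.sum_congr rfl fun k _ => mul_comm _ _
  have hW : Matrix.toBlocks₂₂ X = R * Cmat := by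
    ext i j
    simp only [Matrix.toBlocks₂₂, Matrix.mul_apply, Matrix.of_apply, hR,
      Matrix.toBlocks₂₁, hCmat]
    rw [hCspec j (Sum.inr i)]
    exact Finset.sum_congr rfl fun k _ => mul_comm _ _
  have hB12 : Matrix.toBlocks₁₂ X = S * Cmat := by
    ext i j
    simp only [Matrix.toBlocks₁₂, Matrix.mul_apply, Matrix.of_apply, hS,
      Matrix.toBlocks₁₁, hCmat]
    rw [hCspec j (Sum.inl i)]
    exact Finset.sum_congr rfl fun k _ => mul_comm _ _
  -- Y = -C
  have hY : -(S⁻¹) * Rᵀ = -Cmat := by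
    rw [hRT, Matrix.neg_mul, ← Matrix.mul_assoc,
      Matrix.nonsing_inv_mul S ((Matrix.isUnit_iff_isUnit_det S).1 hSunit),
      Matrix.one_mul]
  -- Final computation
  conv_lhs => rw [← Matrix.fromBlocks_toBlocks X]
  rw [show -(Matrix.toBlocks₁₁ X)⁻¹ * (Matrix.toBlocks₂₁ X)ᵀ = -Cmat from hY,
    Matrix.fromBlocks_mul_fromRows]
  rw [hB12, hW]
  simp [Matrix.mul_neg, hS, hR]
end

section
/- Let X* be an n×n symmetric PSD real matrix and X a symmetric real matrix with ‖X* − X‖₂ = δ. Let ι ⊆ [n] be a set of r columns such that σ_r(X^ι) = τ ≥ δ, where X^ι is the n×r submatrix of columns indexed by ι. Then the smallest eigenvalue of the r×r principal submatrix X^ι_ι satisfies λ_r(X^ι_ι) ≥ (τ − δ)²/(n‖X*‖₂) − δ. -/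
open Matrix
open scoped Matrix.Norms.L2Operator

/-- The lemma of the older Mathlib, removed since: `Aᵀ * A` is Hermitian over a ring with
trivial star. -/
theorem Matrix.isHermitian_transpose_mul_self {m n α : Type*} [Fintype m] [CommRing α]
    [StarRing α] [TrivialStar α] (A : Matrix m n α) : (Aᵀ * A).IsHermitian := by
  have h := Matrix.isHermitian_conjTranspose_mul_self A
  rwa [Matrix.conjTranspose_eq_transpose_of_trivial] at h

/-- `svals A i` is the `(i+1)`-th largest singular value of `A`
(defined as `0` when the index exceeds the number of columns). -/
noncomputable def svals {p q : ℕ} (A : Matrix (Fin p) (Fin q) ℝ) (i : ℕ) : ℝ :=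
  if h : i < q then
    Real.sqrt ((Matrix.isHermitian_transpose_mul_self A).eigenvalues
      (Tuple.sort (Matrix.isHermitian_transpose_mul_self A).eigenvalues ⟨q - 1 - i, by omega⟩))
  else 0

-- helper: transpose dot
lemma dot_t {a b : ℕ} (M : Matrix (Fin a) (Fin b) ℝ) (x : Fin b → ℝ) (y : Fin a → ℝ) :
    (M *ᵥ x) ⬝ᵥ y = x ⬝ᵥ (Mᵀ *ᵥ y) := by
  rw [Matrix.mulVec_transpose, dotProduct_comm (M *ᵥ x) y, Matrix.dotProduct_mulVec,
    dotProduct_comm]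

-- conj psd
lemma conj_psd {m : ℕ} (U : Matrix (Fin m) (Fin m) ℝ) (d : Fin m → ℝ) (hd : ∀ j, 0 ≤ d j) :
    (U * Matrix.diagonal d * star U).PosSemidef :=
  (Matrix.posSemidef_diagonal_iff.mpr hd).mul_mul_conjTranspose_same U

-- spectral decomposition with real scalars
lemma spec_real {m : ℕ} {B : Matrix (Fin m) (Fin m) ℝ} (hB : B.IsHermitian) :
    B = (hB.eigenvectorUnitary : Matrix (Fin m) (Fin m) ℝ) * Matrix.diagonal hB.eigenvalues
      * star (hB.eigenvectorUnitary : Matrix (Fin m) (Fin m) ℝ) := by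
  have := hB.spectral_theorem
  simpa using this

lemma unit_mul_star {m : ℕ} {B : Matrix (Fin m) (Fin m) ℝ} (hB : B.IsHermitian) :
    (hB.eigenvectorUnitary : Matrix (Fin m) (Fin m) ℝ)
      * star (hB.eigenvectorUnitary : Matrix (Fin m) (Fin m) ℝ) = 1 := by
  exact Matrix.mem_unitaryGroup_iff.mp hB.eigenvectorUnitary.2

lemma rayleigh_lower {m : ℕ} {B : Matrix (Fin m) (Fin m) ℝ} (hB : B.IsHermitian)
    {c : ℝ} (hc : ∀ j, c ≤ hB.eigenvalues j) (x : Fin m → ℝ) :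
    c * (x ⬝ᵥ x) ≤ x ⬝ᵥ (B *ᵥ x) := by
  set U : Matrix (Fin m) (Fin m) ℝ := (hB.eigenvectorUnitary : Matrix (Fin m) (Fin m) ℝ) with hU
  have h1 : B - c • (1 : Matrix (Fin m) (Fin m) ℝ)
      = U * Matrix.diagonal (fun j => hB.eigenvalues j - c) * star U := by
    have hd : Matrix.diagonal (fun j => hB.eigenvalues j - c)
        = Matrix.diagonal hB.eigenvalues - c • (1 : Matrix (Fin m) (Fin m) ℝ) := by
      rw [Matrix.smul_one_eq_diagonal, Matrix.diagonal_sub]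
    rw [hd, Matrix.mul_sub, Matrix.sub_mul, ← spec_real hB]
    congr 1
    rw [Matrix.mul_smul, mul_one, Matrix.smul_mul, unit_mul_star hB]
  have hpsd : (B - c • (1 : Matrix (Fin m) (Fin m) ℝ)).PosSemidef := by
    rw [h1]; exact conj_psd U _ (fun j => by simpa using hc j)
  have h2 := hpsd.dotProduct_mulVec_nonneg x
  simp only [star_trivial, Matrix.sub_mulVec, Matrix.smul_mulVec, Matrix.one_mulVec,
    dotProduct_sub, dotProduct_smul, smul_eq_mul] at h2
  linarith

lemma eig_abs_le_norm {m : ℕ} {A : Matrix (Fin m) (Fin m) ℝ} (hA : A.IsHermitian) (j : Fin m) :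
    |hA.eigenvalues j| ≤ ‖A‖ := by
  have hv := hA.mulVec_eigenvectorBasis j
  have h1 := A.l2_opNorm_mulVec (hA.eigenvectorBasis j)
  have hnv : ‖hA.eigenvectorBasis j‖ = 1 := hA.eigenvectorBasis.orthonormal.1 j
  have hv' : A *ᵥ (hA.eigenvectorBasis j) = hA.eigenvalues j • ⇑(hA.eigenvectorBasis j) := hv
  rw [hv'] at h1
  have h2 : ((EuclideanSpace.equiv (Fin m) ℝ).symm <| hA.eigenvalues j • ⇑(hA.eigenvectorBasis j))
      = hA.eigenvalues j • hA.eigenvectorBasis j := rfl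
  rw [h2, norm_smul, hnv, Real.norm_eq_abs, mul_one, mul_one] at h1
  exact h1

lemma psd_sq_le {m : ℕ} {M : Matrix (Fin m) (Fin m) ℝ} (hM : M.PosSemidef) (x : Fin m → ℝ) :
    x ⬝ᵥ ((M * M) *ᵥ x) ≤ ‖M‖ * (x ⬝ᵥ (M *ᵥ x)) := by
  set hB := hM.isHermitian with hBdef
  set U : Matrix (Fin m) (Fin m) ℝ := (hB.eigenvectorUnitary : Matrix (Fin m) (Fin m) ℝ) with hU
  have hUs : star U * U = 1 := Matrix.mem_unitaryGroup_iff'.mp hB.eigenvectorUnitary.2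
  have h1 : ‖M‖ • M - M * M
      = U * Matrix.diagonal (fun j => ‖M‖ * hB.eigenvalues j - hB.eigenvalues j * hB.eigenvalues j)
        * star U := by
    have hd : Matrix.diagonal (fun j => ‖M‖ * hB.eigenvalues j - hB.eigenvalues j * hB.eigenvalues j)
        = ‖M‖ • Matrix.diagonal hB.eigenvalues
          - Matrix.diagonal hB.eigenvalues * Matrix.diagonal hB.eigenvalues := by
      rw [Matrix.diagonal_mul_diagonal, ← Matrix.diagonal_smul, Matrix.diagonal_sub]
      rfl
    have hsq : (U * Matrix.diagonal hB.eigenvalues * star U)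
        * (U * Matrix.diagonal hB.eigenvalues * star U)
        = U * (Matrix.diagonal hB.eigenvalues * Matrix.diagonal hB.eigenvalues) * star U := by
      calc (U * Matrix.diagonal hB.eigenvalues * star U)
            * (U * Matrix.diagonal hB.eigenvalues * star U)
          = U * Matrix.diagonal hB.eigenvalues
            * ((star U * U) * (Matrix.diagonal hB.eigenvalues * star U)) := by noncomm_ring
        _ = U * (Matrix.diagonal hB.eigenvalues * Matrix.diagonal hB.eigenvalues) * star U := by
            rw [hUs, Matrix.one_mul]; noncomm_ring
    rw [hd, Matrix.mul_sub, Matrix.sub_mul, ← hsq, ← spec_real hB]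
    congr 1
    rw [Matrix.mul_smul, Matrix.smul_mul, ← spec_real hB]
  have hpsd : (‖M‖ • M - M * M).PosSemidef := by
    rw [h1]
    refine conj_psd U _ (fun j => ?_)
    have h2 : 0 ≤ hB.eigenvalues j := hM.eigenvalues_nonneg j
    have h3 : hB.eigenvalues j ≤ ‖M‖ := (abs_le.mp (eig_abs_le_norm hB j)).2
    nlinarith
  have h2 := hpsd.dotProduct_mulVec_nonneg x
  simp only [star_trivial, Matrix.sub_mulVec, Matrix.smul_mulVec,
    dotProduct_sub, dotProduct_smul, smul_eq_mul] at h2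
  linarith

lemma eu_norm_sq {m : ℕ} (w : Fin m → ℝ) :
    ‖(EuclideanSpace.equiv (Fin m) ℝ).symm w‖ ^ 2 = w ⬝ᵥ w := by
  rw [EuclideanSpace.norm_eq, Real.sq_sqrt (by positivity)]
  simp [dotProduct, Real.norm_eq_abs, sq_abs, sq]

lemma eu_inner_eq {m : ℕ} (w z : Fin m → ℝ) :
    (inner ℝ ((EuclideanSpace.equiv (Fin m) ℝ).symm w)
      ((EuclideanSpace.equiv (Fin m) ℝ).symm z) : ℝ) = w ⬝ᵥ z := by
  simp [PiLp.inner_apply, dotProduct, mul_comm]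

lemma sort_min {q : ℕ} (f : Fin q → ℝ) (h0 : q - 1 - (q - 1) < q) (j : Fin q) :
    f (Tuple.sort f ⟨q - 1 - (q - 1), h0⟩) ≤ f j := by
  have h := Tuple.monotone_sort f
    (a := ⟨q - 1 - (q - 1), h0⟩) (b := (Tuple.sort f)⁻¹ j) (by simp [Fin.le_def])
  simpa using h

lemma mul_P {n r : ℕ} (ι : Fin r → Fin n) (M : Matrix (Fin n) (Fin n) ℝ) :
    M * ((1 : Matrix (Fin n) (Fin n) ℝ).submatrix id ι) = M.submatrix id ι := by
  ext j k
  simp [Matrix.mul_apply, Matrix.one_apply]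

lemma Pt_mul {n r q : ℕ} (ι : Fin r → Fin n) (M : Matrix (Fin n) (Fin q) ℝ) :
    ((1 : Matrix (Fin n) (Fin n) ℝ).submatrix id ι)ᵀ * M = M.submatrix ι id := by
  ext k j
  simp [Matrix.mul_apply, Matrix.one_apply]

lemma Pt_P {n r : ℕ} (ι : Fin r → Fin n) (hι : Function.Injective ι) :
    ((1 : Matrix (Fin n) (Fin n) ℝ).submatrix id ι)ᵀ
      * ((1 : Matrix (Fin n) (Fin n) ℝ).submatrix id ι) = 1 := by
  rw [Pt_mul]
  ext k k'
  simp [Matrix.one_apply, hι.eq_iff]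

set_option maxHeartbeats 2000000 in
/-- Perturbation lemma: if `‖X* − X‖₂ = δ`, `ι` indexes `r` columns of the symmetric
matrix `X` with `σ_r(X^ι) = τ ≥ δ`, then every eigenvalue of the principal submatrix
`X^ι_ι` (in particular the smallest) is at least `(τ − δ)²/(n‖X*‖₂) − δ`. -/
theorem stmt3 {n r : ℕ} (Xs X : Matrix (Fin n) (Fin n) ℝ)
    (hXs : Xs.PosSemidef) (hX : X.IsHermitian)
    (ι : Fin r → Fin n) (hι : Function.Injective ι)
    (δ τ : ℝ) (hδ : ‖Xs - X‖ = δ)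
    (hτ : svals (X.submatrix id ι) (r - 1) = τ) (hτδ : δ ≤ τ)
    (hsub : (X.submatrix ι ι).IsHermitian) :
    ∀ i : Fin r, (τ - δ) ^ 2 / (n * ‖Xs‖) - δ ≤ hsub.eigenvalues i := by
  intro i
  have hr : 0 < r := i.pos
  have hn1 : (1 : ℝ) ≤ (n : ℝ) := by exact_mod_cast (ι i).pos
  have hδ0 : 0 ≤ δ := hδ ▸ norm_nonneg _
  have hτ0 : 0 ≤ τ := le_trans hδ0 hτδ
  set E : Matrix (Fin n) (Fin n) ℝ := Xs - X with hE
  set A : Matrix (Fin n) (Fin r) ℝ := X.submatrix id ι with hA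
  set P : Matrix (Fin n) (Fin r) ℝ := (1 : Matrix (Fin n) (Fin n) ℝ).submatrix id ι with hP
  set lam := hsub.eigenvalues i with hlam
  set w : Fin r → ℝ := (WithLp.equiv 2 (Fin r → ℝ)) (hsub.eigenvectorBasis i) with hw
  have hAv : (X.submatrix ι ι) *ᵥ w = lam • w := hsub.mulVec_eigenvectorBasis i
  have hwnorm : ‖hsub.eigenvectorBasis i‖ = 1 := hsub.eigenvectorBasis.orthonormal.1 i
  have hwdot : w ⬝ᵥ w = 1 := by
    have h := eu_norm_sq w
    have h2 : (EuclideanSpace.equiv (Fin r) ℝ).symm w = hsub.eigenvectorBasis i := rfl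
    rw [h2, hwnorm] at h
    simpa using h.symm
  set u : Fin n → ℝ := P *ᵥ w with hu
  have hudot : u ⬝ᵥ u = 1 := by
    rw [hu, dot_t, Matrix.mulVec_mulVec, hP, Pt_P ι hι, Matrix.one_mulVec, hwdot]
  have hXu : X *ᵥ u = A *ᵥ w := by
    rw [hu, Matrix.mulVec_mulVec, hP, mul_P, ← hA]
  have huXu : u ⬝ᵥ (X *ᵥ u) = lam := by
    rw [hXu, hu, dot_t, Matrix.mulVec_mulVec, hP, hA, Pt_mul, Matrix.submatrix_submatrix,
      Function.comp_id, Function.id_comp, hAv, dotProduct_smul, hwdot, smul_eq_mul, mul_one]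
  -- singular value lower bound
  have hc : ∀ j, τ ^ 2 ≤ (Matrix.isHermitian_transpose_mul_self A).eigenvalues j := by
    intro j
    have h0 : r - 1 - (r - 1) < r := by omega
    unfold svals at hτ
    rw [dif_pos (show r - 1 < r by omega)] at hτ
    have hps : (Aᵀ * A).PosSemidef := by
      simpa [Matrix.conjTranspose_eq_transpose_of_trivial] using
        Matrix.posSemidef_conjTranspose_mul_self A
    rw [← hτ, Real.sq_sqrt (hps.eigenvalues_nonneg _)]
    exact sort_min _ _ j
  have hAvdot : τ ^ 2 ≤ (A *ᵥ w) ⬝ᵥ (A *ᵥ w) := by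
    have h1 := rayleigh_lower (Matrix.isHermitian_transpose_mul_self A) hc w
    rw [hwdot, mul_one] at h1
    rw [dot_t, Matrix.mulVec_mulVec]
    rw [← Matrix.conjTranspose_eq_transpose_of_trivial]
    exact h1
  -- Euclidean norms
  have hue : ‖(EuclideanSpace.equiv (Fin n) ℝ).symm u‖ = 1 := by
    have h := eu_norm_sq u
    rw [hudot] at h
    nlinarith [norm_nonneg ((EuclideanSpace.equiv (Fin n) ℝ).symm u)]
  have hEu : ‖(EuclideanSpace.equiv (Fin n) ℝ).symm (E *ᵥ u)‖ ≤ δ := by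
    have h := E.l2_opNorm_mulVec ((EuclideanSpace.equiv (Fin n) ℝ).symm u)
    rw [hue, mul_one, hδ] at h
    exact h
  have hXuτ : τ ≤ ‖(EuclideanSpace.equiv (Fin n) ℝ).symm (X *ᵥ u)‖ := by
    have h := eu_norm_sq (X *ᵥ u)
    have h2 : τ ^ 2 ≤ (X *ᵥ u) ⬝ᵥ (X *ᵥ u) := by rw [hXu]; exact hAvdot
    nlinarith [norm_nonneg ((EuclideanSpace.equiv (Fin n) ℝ).symm (X *ᵥ u))]
  have htri : τ - δ ≤ ‖(EuclideanSpace.equiv (Fin n) ℝ).symm (Xs *ᵥ u)‖ := by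
    have hXsu : Xs *ᵥ u = X *ᵥ u + E *ᵥ u := by
      rw [hE, Matrix.sub_mulVec]; abel
    have hmap : (EuclideanSpace.equiv (Fin n) ℝ).symm (Xs *ᵥ u)
        = (EuclideanSpace.equiv (Fin n) ℝ).symm (X *ᵥ u)
          + (EuclideanSpace.equiv (Fin n) ℝ).symm (E *ᵥ u) := by
      rw [hXsu, map_add]
    have h4 := norm_le_add_norm_add ((EuclideanSpace.equiv (Fin n) ℝ).symm (X *ᵥ u))
      ((EuclideanSpace.equiv (Fin n) ℝ).symm (E *ᵥ u))
    rw [← hmap] at h4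
    linarith
  set b := u ⬝ᵥ (Xs *ᵥ u) with hb
  have hb0 : 0 ≤ b := by simpa using hXs.dotProduct_mulVec_nonneg u
  have hXst : Xsᵀ = Xs := by
    rw [← Matrix.conjTranspose_eq_transpose_of_trivial]; exact hXs.1
  have hsq : ‖(EuclideanSpace.equiv (Fin n) ℝ).symm (Xs *ᵥ u)‖ ^ 2 ≤ ‖Xs‖ * b := by
    have h1 := eu_norm_sq (Xs *ᵥ u)
    have h2 : (Xs *ᵥ u) ⬝ᵥ (Xs *ᵥ u) = u ⬝ᵥ ((Xs * Xs) *ᵥ u) := by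
      rw [dot_t, hXst, Matrix.mulVec_mulVec]
    rw [h1, h2]
    exact psd_sq_le hXs u
  have huEu : u ⬝ᵥ (E *ᵥ u) ≤ δ := by
    have h := real_inner_le_norm ((EuclideanSpace.equiv (Fin n) ℝ).symm u)
      ((EuclideanSpace.equiv (Fin n) ℝ).symm (E *ᵥ u))
    rw [eu_inner_eq, hue, one_mul] at h
    exact le_trans h hEu
  have hlamb : lam = b - u ⬝ᵥ (E *ᵥ u) := by
    have hXsub : X *ᵥ u = Xs *ᵥ u - E *ᵥ u := by
      rw [hE, Matrix.sub_mulVec]; abel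
    rw [← huXu, hXsub, dotProduct_sub]
  have hτδ0 : 0 ≤ τ - δ := by linarith
  have hkey : (τ - δ) ^ 2 / (↑n * ‖Xs‖) ≤ b := by
    rcases eq_or_lt_of_le (norm_nonneg Xs) with h | h
    · have h5 : (τ - δ) ^ 2 ≤ 0 := by nlinarith [htri, hsq]
      rw [le_antisymm h5 (sq_nonneg _), zero_div]
      exact hb0
    · have hnXs : 0 < (n : ℝ) * ‖Xs‖ := mul_pos (by linarith) h
      rw [div_le_iff₀ hnXs]
      nlinarith [htri, hsq, hb0, hn1, h]
  linarith [hlamb, huEu, hkey]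
end

section
/- Let P = {X ∈ 𝕊ⁿ : 𝒜(X) = b, X ⪰ 0} be nonempty, let X* ∈ P be a solution of minimum rank r, and let ι ⊆ [n] with |ι| = r be a maximal set of linearly independent columns of X*. Define 𝒲_{r,ι}(ℝ) = {X ∈ 𝕊ⁿ : 𝒜(X) = b, ∃Y ∈ ℝ^{n×(n-r)}, XY = 0, Y_{[n]∖ι} = I_{n-r}}. Then the connected component C of 𝒲_{r,ι}(ℝ) containing X* satisfies C ⊆ P. -/
open Matrix

section auxStmt12

variable {r m : ℕ}

/-- The set of matrices with strictly positive quadratic form on nonzero vectors. -/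
def posQuadStmt12 (r : ℕ) : Set (Matrix (Fin r) (Fin r) ℝ) :=
  {M | ∀ x : Fin r → ℝ, x ≠ 0 → 0 < x ⬝ᵥ (M *ᵥ x)}

lemma quadContinuousStmt12 (M : Matrix (Fin r) (Fin r) ℝ) :
    Continuous fun x : Fin r → ℝ => x ⬝ᵥ (M *ᵥ x) := by
  unfold dotProduct mulVec
  refine continuous_finset_sum _ fun i _ => ((continuous_apply i).mul ?_)
  exact continuous_finset_sum _ fun j _ => continuous_const.mul (continuous_apply j)

lemma quadBoundStmt12 (N : Matrix (Fin r) (Fin r) ℝ) (x : Fin r → ℝ)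
    (δ : ℝ) (hN : ∀ i j, |N i j| ≤ δ) (hx : ∀ i, |x i| ≤ 1) (hδ : 0 ≤ δ) :
    |x ⬝ᵥ (N *ᵥ x)| ≤ (r : ℝ)^2 * δ := by
  unfold dotProduct mulVec
  calc |∑ i, x i * ∑ j, N i j * x j| ≤ ∑ i, |x i * ∑ j, N i j * x j| :=
        Finset.abs_sum_le_sum_abs _ _
    _ ≤ ∑ i : Fin r, ∑ j : Fin r, δ := by
        refine Finset.sum_le_sum fun i _ => ?_
        rw [abs_mul]
        calc |x i| * |∑ j, N i j * x j| ≤ 1 * ∑ j, |N i j * x j| := by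
              refine mul_le_mul (hx i) (Finset.abs_sum_le_sum_abs _ _) (abs_nonneg _) zero_le_one
          _ = ∑ j, |N i j| * |x j| := by
              rw [one_mul]; exact Finset.sum_congr rfl fun j _ => abs_mul _ _
          _ ≤ ∑ j : Fin r, δ := by
              refine Finset.sum_le_sum fun j _ => ?_
              calc |N i j| * |x j| ≤ δ * 1 := mul_le_mul (hN i j) (hx j) (abs_nonneg _) hδ
                _ = δ := mul_one δ
    _ = (r:ℝ)^2 * δ := by simp [Finset.sum_const, sq]; ring

lemma isOpenPosQuadStmt12 (r : ℕ) : IsOpen (posQuadStmt12 r) := by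
  rcases Nat.eq_zero_or_pos r with hr | hr
  · subst hr
    convert isOpen_univ
    ext M
    simp only [posQuadStmt12, Set.mem_setOf_eq, Set.mem_univ, iff_true]
    intro x hx
    exact absurd (Subsingleton.elim x 0) hx
  · haveI : Nontrivial (Fin r → ℝ) := by
      have : Nonempty (Fin r) := ⟨⟨0, hr⟩⟩
      infer_instance
    show IsOpen {M : (Fin r) → (Fin r) → ℝ | ∀ x : Fin r → ℝ, x ≠ 0 → 0 < x ⬝ᵥ (Matrix.of M *ᵥ x)}
    rw [Metric.isOpen_iff]
    intro M₀ hM₀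
    obtain ⟨x₀, hx₀s, hx₀min⟩ :=
      (isCompact_sphere (0 : Fin r → ℝ) 1).exists_isMinOn
        (NormedSpace.sphere_nonempty.mpr zero_le_one) (quadContinuousStmt12 M₀).continuousOn
    have hx₀norm : ‖x₀‖ = 1 := by simpa using hx₀s
    have hx₀ne : x₀ ≠ 0 := by
      intro h; rw [h, norm_zero] at hx₀norm; norm_num at hx₀norm
    set c : ℝ := x₀ ⬝ᵥ (M₀ *ᵥ x₀) with hc
    have hcpos : 0 < c := hM₀ x₀ hx₀ne
    refine ⟨c / ((r:ℝ)^2 + 1), by positivity, ?_⟩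
    intro M hM x hx
    rw [Metric.mem_ball] at hM
    set δ := dist M M₀ with hδdef
    have hδ : 0 ≤ δ := dist_nonneg
    have hent : ∀ i j, |M i j - M₀ i j| ≤ δ := by
      intro i j
      rw [← Real.dist_eq]
      exact (dist_le_pi_dist (M i) (M₀ i) j).trans (dist_le_pi_dist M M₀ i)
    have key : ∀ y : Fin r → ℝ, ‖y‖ = 1 → 0 < y ⬝ᵥ (M *ᵥ y) := by
      intro y hy
      have hysph : y ∈ Metric.sphere (0 : Fin r → ℝ) 1 := by simpa using hy
      have h1 : c ≤ y ⬝ᵥ (M₀ *ᵥ y) := hx₀min hysph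
      have hyi : ∀ i, |y i| ≤ 1 := by
        intro i
        calc |y i| = ‖y i‖ := rfl
          _ ≤ ‖y‖ := norm_le_pi_norm y i
          _ = 1 := hy
      have h2 : |y ⬝ᵥ ((M - M₀) *ᵥ y)| ≤ (r:ℝ)^2 * δ :=
        quadBoundStmt12 _ _ δ (fun i j => hent i j) hyi hδ
      have hsplit : y ⬝ᵥ (M *ᵥ y) = y ⬝ᵥ (M₀ *ᵥ y) + y ⬝ᵥ ((M - M₀) *ᵥ y) := by
        change y ⬝ᵥ (of M *ᵥ y) = y ⬝ᵥ (of M₀ *ᵥ y) + y ⬝ᵥ ((of M - of M₀) *ᵥ y)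
        rw [sub_mulVec, dotProduct_sub]; ring
      rw [hsplit]
      have : (r:ℝ)^2 * δ < (r:ℝ)^2 * (c / ((r:ℝ)^2 + 1)) + c / ((r:ℝ)^2 + 1) := by
        have h3 : δ < c / ((r:ℝ)^2 + 1) := hM
        nlinarith [sq_nonneg (r:ℝ), div_pos hcpos (by positivity : (0:ℝ) < (r:ℝ)^2 + 1)]
      have hcc : (r:ℝ)^2 * (c / ((r:ℝ)^2 + 1)) + c / ((r:ℝ)^2 + 1) = c := by
        field_simp
      nlinarith [abs_le.mp h2]
    have hxn : 0 < ‖x‖ := norm_pos_iff.mpr hx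
    set y := ‖x‖⁻¹ • x with hy
    have hyn : ‖y‖ = 1 := by
      rw [hy, norm_smul, norm_inv, norm_norm, inv_mul_cancel₀ hxn.ne']
    show 0 < x ⬝ᵥ (M *ᵥ x)
    have hne : ‖x‖ ≠ 0 := hxn.ne'
    have hq : x ⬝ᵥ (M *ᵥ x) = ‖x‖^2 * (y ⬝ᵥ (M *ᵥ y)) := by
      change x ⬝ᵥ (of M *ᵥ x) = ‖x‖^2 * (y ⬝ᵥ (of M *ᵥ y))
      rw [hy, smul_dotProduct, mulVec_smul, dotProduct_smul, smul_eq_mul, smul_eq_mul]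
      field_simp
    rw [hq]
    exact mul_pos (by positivity) (key y hyn)

lemma hsymOfHermStmt12 {n : Type*} {X : Matrix n n ℝ} (hX : X.IsHermitian) (i j : n) :
    X j i = X i j := by simpa using hX.apply i j

lemma decompStmt12 {X : Matrix (Fin r ⊕ Fin m) (Fin r ⊕ Fin m) ℝ}
    (hX : X.IsHermitian) {Y : Matrix (Fin r) (Fin m) ℝ}
    (hY : X * Matrix.fromRows Y (1 : Matrix (Fin m) (Fin m) ℝ) = 0) :
    X = fromRows (1 : Matrix (Fin r) (Fin r) ℝ) (-Yᵀ) * X.toBlocks₁₁ *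
        fromCols (1 : Matrix (Fin r) (Fin r) ℝ) (-Y) := by
  set B := X.toBlocks₁₁ with hB
  set C := X.toBlocks₁₂ with hC
  set C' := X.toBlocks₂₁ with hC'
  set D := X.toBlocks₂₂ with hD
  have h0 : X = fromBlocks B C C' D := (fromBlocks_toBlocks X).symm
  rw [h0, fromBlocks_mul_fromRows] at hY
  have e1 : B * Y + C = 0 := by
    ext i j
    have := congrFun (congrFun hY (Sum.inl i)) j
    simpa using this
  have e2 : C' * Y + D = 0 := by
    ext i j
    have := congrFun (congrFun hY (Sum.inr i)) j
    simpa using this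
  have hCeq : C = -(B * Y) := eq_neg_of_add_eq_zero_right e1
  have hBsym : Bᵀ = B := by
    ext i j
    exact hsymOfHermStmt12 hX (Sum.inl i) (Sum.inl j)
  have hC'eq : C' = Cᵀ := by
    ext i j
    exact (hsymOfHermStmt12 hX (Sum.inr i) (Sum.inl j)).symm
  have hC'B : C' = -(Yᵀ * B) := by
    rw [hC'eq, hCeq, transpose_neg, transpose_mul, hBsym]
  have hDeq : D = Yᵀ * B * Y := by
    have h := eq_neg_of_add_eq_zero_right e2
    rw [h, hC'B]
    simp [Matrix.mul_assoc]
  rw [fromRows_mul, fromRows_mul_fromCols]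
  rw [h0]
  rw [fromBlocks_inj]
  refine ⟨by simp, ?_, ?_, ?_⟩
  · rw [hCeq]; simp [Matrix.mul_neg]
  · rw [hC'B]; simp [Matrix.neg_mul]
  · rw [hDeq]; simp [Matrix.mul_assoc]

lemma conjTransposeRealStmt12 {n p : Type*} (M : Matrix n p ℝ) : Mᴴ = Mᵀ := by
  ext i j; simp [conjTranspose_apply]

lemma psdOfBlocksStmt12 (B : Matrix (Fin r) (Fin r) ℝ) (hB : B.PosSemidef)
    (Y : Matrix (Fin r) (Fin m) ℝ) :
    (fromRows (1 : Matrix (Fin r) (Fin r) ℝ) (-Yᵀ) * B *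
      fromCols (1 : Matrix (Fin r) (Fin r) ℝ) (-Y)).PosSemidef := by
  have h : fromCols (1 : Matrix (Fin r) (Fin r) ℝ) (-Y) =
      (fromRows (1 : Matrix (Fin r) (Fin r) ℝ) (-Yᵀ))ᴴ := by
    rw [conjTransposeRealStmt12, transpose_fromRows, transpose_one, transpose_neg,
      transpose_transpose]
  rw [h]
  exact hB.mul_mul_conjTranspose_same _

lemma rankEqRStmt12 (Xs : Matrix (Fin r ⊕ Fin m) (Fin r ⊕ Fin m) ℝ)
    (hind : LinearIndependent ℝ (fun j : Fin r => fun i => Xs i (Sum.inl j)))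
    (hspan : ∀ j : Fin r ⊕ Fin m,
      (fun i => Xs i j) ∈
        Submodule.span ℝ (Set.range (fun j : Fin r => fun i => Xs i (Sum.inl j)))) :
    Xs.rank = r := by
  rw [rank_eq_finrank_span_cols]
  have hspan2 : Submodule.span ℝ (Set.range Xsᵀ) =
      Submodule.span ℝ (Set.range (fun j : Fin r => fun i => Xs i (Sum.inl j))) := by
    apply le_antisymm
    · rw [Submodule.span_le]
      rintro v ⟨u, rfl⟩
      exact hspan u
    · rw [Submodule.span_le]
      rintro v ⟨j, rfl⟩
      exact Submodule.subset_span ⟨Sum.inl j, rfl⟩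
  change Module.finrank ℝ (Submodule.span ℝ (Set.range Xsᵀ)) = r
  rw [hspan2, finrank_span_eq_card hind, Fintype.card_fin]

lemma quadPosOfRankStmt12 (B : Matrix (Fin r) (Fin r) ℝ) (hB : B.PosSemidef)
    (hrk : (r : ℕ) ≤ B.rank) : B ∈ posQuadStmt12 r := by
  have hle : B.rank ≤ r := by
    have := Matrix.rank_le_card_height B
    simpa using this
  have hrank : B.rank = r := le_antisymm hle hrk
  have htop : LinearMap.range B.mulVecLin = ⊤ := by
    apply Submodule.eq_top_of_finrank_eq
    rw [← Matrix.rank, hrank, Module.finrank_fin_fun]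
  have hinj : Function.Injective B.mulVecLin :=
    (LinearMap.injective_iff_surjective).mpr (LinearMap.range_eq_top.mp htop)
  intro x hx
  have hne : B *ᵥ x ≠ 0 := by
    intro h0
    exact hx (hinj (by simpa [Matrix.mulVecLin_apply] using h0))
  have h1 : x ⬝ᵥ B *ᵥ x ≠ 0 := by
    intro h0
    apply hne
    rw [← hB.dotProduct_mulVec_zero_iff x]
    simpa using h0
  have h2 : 0 ≤ x ⬝ᵥ B *ᵥ x := by simpa using hB.dotProduct_mulVec_nonneg x
  exact lt_of_le_of_ne h2 (Ne.symm h1)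

lemma existsYStmt12 (Xs : Matrix (Fin r ⊕ Fin m) (Fin r ⊕ Fin m) ℝ)
    (hspan : ∀ j : Fin r ⊕ Fin m,
      (fun i => Xs i j) ∈
        Submodule.span ℝ (Set.range (fun j : Fin r => fun i => Xs i (Sum.inl j)))) :
    ∃ Y : Matrix (Fin r) (Fin m) ℝ,
      Xs * Matrix.fromRows Y (1 : Matrix (Fin m) (Fin m) ℝ) = 0 := by
  have hc : ∀ j : Fin m, ∃ c : Fin r → ℝ,
      (∑ i, c i • (fun i' => Xs i' (Sum.inl i))) = fun i' => Xs i' (Sum.inr j) := by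
    intro j
    exact (Submodule.mem_span_range_iff_exists_fun ℝ).mp (hspan (Sum.inr j))
  choose c hc using hc
  refine ⟨Matrix.of fun i j => -(c j i), ?_⟩
  ext a j
  rw [Matrix.mul_apply]
  rw [Fintype.sum_sum_type]
  have h2 : ∑ i : Fin m, Xs a (Sum.inr i) * fromRows (Matrix.of fun i j => -(c j i))
      (1 : Matrix (Fin m) (Fin m) ℝ) (Sum.inr i) j = Xs a (Sum.inr j) := by
    simp [fromRows_apply_inr, one_apply, Finset.sum_ite_eq]
  have h1 : ∑ i : Fin r, Xs a (Sum.inl i) * fromRows (Matrix.of fun i j => -(c j i))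
      (1 : Matrix (Fin m) (Fin m) ℝ) (Sum.inl i) j = -Xs a (Sum.inr j) := by
    have := congrFun (hc j) a
    rw [Finset.sum_apply] at this
    simp only [Pi.smul_apply, smul_eq_mul] at this
    simp only [fromRows_apply_inl, Matrix.of_apply]
    rw [← neg_eq_iff_eq_neg, ← this, ← Finset.sum_neg_distrib]
    exact Finset.sum_congr rfl fun i _ => by ring
  rw [h1, h2]
  simp

end auxStmt12

/-- Theorem (HNS refinement, part (a)): if `X*` is a minimum-rank solution of the
feasible system `𝒜(X) = b, X ⪰ 0` and its first `r` columns (indices `Sum.inl`)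
form a maximal set of linearly independent columns, then the connected component of
`𝒲_{r,ι}(ℝ) = {X symmetric : 𝒜X = b, ∃Y, X·[[Y],[I]] = 0}` containing `X*`
is contained in the feasible set `P`. -/
theorem stmt12 {r m k : ℕ}
    (A : Matrix (Fin r ⊕ Fin m) (Fin r ⊕ Fin m) ℝ →ₗ[ℝ] (Fin k → ℝ)) (b : Fin k → ℝ)
    (Xs : Matrix (Fin r ⊕ Fin m) (Fin r ⊕ Fin m) ℝ)
    (hXsP : A Xs = b ∧ Xs.PosSemidef)
    (hmin : ∀ X : Matrix (Fin r ⊕ Fin m) (Fin r ⊕ Fin m) ℝ,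
      A X = b → X.PosSemidef → Xs.rank ≤ X.rank)
    (hind : LinearIndependent ℝ (fun j : Fin r => fun i => Xs i (Sum.inl j)))
    (hspan : ∀ j : Fin r ⊕ Fin m,
      (fun i => Xs i j) ∈
        Submodule.span ℝ (Set.range (fun j : Fin r => fun i => Xs i (Sum.inl j)))) :
    connectedComponentIn
        {X : Matrix (Fin r ⊕ Fin m) (Fin r ⊕ Fin m) ℝ |
          X.IsHermitian ∧ A X = b ∧ ∃ Y : Matrix (Fin r) (Fin m) ℝ,
            X * Matrix.fromRows Y (1 : Matrix (Fin m) (Fin m) ℝ) = 0} Xs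
      ⊆ {X : Matrix (Fin r ⊕ Fin m) (Fin r ⊕ Fin m) ℝ | A X = b ∧ X.PosSemidef} := by
  obtain ⟨hAXs, hXsPSD⟩ := hXsP
  set W : Set (Matrix (Fin r ⊕ Fin m) (Fin r ⊕ Fin m) ℝ) :=
    {X | X.IsHermitian ∧ A X = b ∧ ∃ Y : Matrix (Fin r) (Fin m) ℝ,
      X * Matrix.fromRows Y (1 : Matrix (Fin m) (Fin m) ℝ) = 0} with hW
  have hrXs : Xs.rank = r := rankEqRStmt12 Xs hind hspan
  obtain ⟨Y₀, hY₀⟩ := existsYStmt12 Xs hspan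
  have hXsW : Xs ∈ W := ⟨hXsPSD.isHermitian, hAXs, Y₀, hY₀⟩
  -- key facts
  have f2 : ∀ Z ∈ W, Z.toBlocks₁₁ ∈ posQuadStmt12 r → Z.PosSemidef := by
    rintro Z ⟨hZh, hZb, Y, hZY⟩ hQ
    rw [decompStmt12 hZh hZY]
    apply psdOfBlocksStmt12
    have hBh : Z.toBlocks₁₁.IsHermitian := by
      apply Matrix.IsHermitian.ext
      intro i j
      simpa [toBlocks₁₁] using hsymOfHermStmt12 hZh (Sum.inl i) (Sum.inl j)
    exact (Matrix.PosDef.posSemidef (Matrix.PosDef.of_dotProduct_mulVec_pos hBh fun x hx => by simpa using hQ x hx))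
  have f3 : ∀ Z ∈ W, Z.PosSemidef → Z.toBlocks₁₁ ∈ posQuadStmt12 r := by
    rintro Z ⟨hZh, hZb, Y, hZY⟩ hpsd
    have hBsub : Z.toBlocks₁₁ = Z.submatrix Sum.inl Sum.inl := rfl
    have hBpsd : Z.toBlocks₁₁.PosSemidef := by
      rw [hBsub]; exact hpsd.submatrix Sum.inl
    have h1 : Xs.rank ≤ Z.rank := hmin Z hZb hpsd
    have h2 : Z.rank ≤ (Z.toBlocks₁₁).rank := by
      calc Z.rank = (fromRows (1 : Matrix (Fin r) (Fin r) ℝ) (-Yᵀ) * Z.toBlocks₁₁ *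
            fromCols (1 : Matrix (Fin r) (Fin r) ℝ) (-Y)).rank := by
            rw [← decompStmt12 hZh hZY]
        _ ≤ (fromRows (1 : Matrix (Fin r) (Fin r) ℝ) (-Yᵀ) * Z.toBlocks₁₁).rank :=
            Matrix.rank_mul_le_left _ _
        _ ≤ (Z.toBlocks₁₁).rank := Matrix.rank_mul_le_right _ _
    exact quadPosOfRankStmt12 _ hBpsd (by omega)
  -- topology
  set U : Set (Matrix (Fin r ⊕ Fin m) (Fin r ⊕ Fin m) ℝ) :=
    (fun Z : Matrix (Fin r ⊕ Fin m) (Fin r ⊕ Fin m) ℝ => Z.toBlocks₁₁) ⁻¹' posQuadStmt12 r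
    with hU
  have hUopen : IsOpen U := by
    refine (isOpenPosQuadStmt12 r).preimage ?_
    apply continuous_pi
    intro i
    apply continuous_pi
    intro j
    exact (continuous_apply (Sum.inl j)).comp (continuous_apply (Sum.inl i))
  set V : Set (Matrix (Fin r ⊕ Fin m) (Fin r ⊕ Fin m) ℝ) :=
    {Z | ∃ x : (Fin r ⊕ Fin m) → ℝ, x ⬝ᵥ (Z *ᵥ x) < 0} with hV
  have hVopen : IsOpen V := by
    have : V = ⋃ x : (Fin r ⊕ Fin m) → ℝ,
        {Z : Matrix (Fin r ⊕ Fin m) (Fin r ⊕ Fin m) ℝ | x ⬝ᵥ (Z *ᵥ x) < 0} := by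
      ext Z; simp [hV, Set.mem_iUnion]
    rw [this]
    refine isOpen_iUnion fun x => ?_
    have hcont : Continuous fun Z : Matrix (Fin r ⊕ Fin m) (Fin r ⊕ Fin m) ℝ =>
        x ⬝ᵥ (Z *ᵥ x) := by
      unfold dotProduct mulVec
      refine continuous_finset_sum _ fun i _ => Continuous.mul continuous_const ?_
      refine continuous_finset_sum _ fun j _ => Continuous.mul ?_ continuous_const
      exact (continuous_apply j).comp (continuous_apply i)
    exact isOpen_Iio.preimage hcont
  set C : Set (Matrix (Fin r ⊕ Fin m) (Fin r ⊕ Fin m) ℝ) := connectedComponentIn W Xs with hCdef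
  have hCW : C ⊆ W := connectedComponentIn_subset _ _
  have hXsC : Xs ∈ C := mem_connectedComponentIn hXsW
  have hCUV : C ⊆ U ∪ V := by
    intro Z hZ
    have hZW := hCW hZ
    by_cases hp : Z.PosSemidef
    · exact Or.inl (f3 Z hZW hp)
    · refine Or.inr ?_
      by_contra hnV
      apply hp
      simp only [hV, Set.mem_setOf_eq, not_exists, not_lt] at hnV
      exact PosSemidef.of_dotProduct_mulVec_nonneg hZW.1 fun x => by simpa using hnV x
  have hdisj : ∀ Z ∈ C, Z ∈ U → Z ∉ V := by
    intro Z hZC hZU hZV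
    have hpsd := f2 Z (hCW hZC) hZU
    obtain ⟨x, hx⟩ := hZV
    have := hpsd.dotProduct_mulVec_nonneg x
    simp only [star_trivial] at this
    exact absurd hx (not_lt.mpr (by simpa using this))
  intro X hXC
  have hXW := hCW hXC
  have hXU : X ∈ U := by
    rcases hCUV hXC with h | h
    · exact h
    · exfalso
      have hpre : IsPreconnected C := isPreconnected_connectedComponentIn
      obtain ⟨Z, hZC, hZU, hZV⟩ := hpre U V hUopen hVopen hCUV
        ⟨Xs, hXsC, f3 Xs hXsW hXsPSD⟩ ⟨X, hXC, h⟩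
      exact hdisj Z hZC hZU hZV
  exact ⟨hXW.2.1, f2 X hXW hXU⟩
end

section
/- Consider the polynomial system F over reals in variables (X₂₂, X₂₃, Y₁, Y₂): Y₁ − X₂₂/2 + 1/2 = 0; X₂₃ + X₂₂Y₂ = 0; X₂₃Y₂ − Y₁(X₂₂/2 − 1/2) = 0. Then (X₂₂, X₂₃, Y₁, Y₂) = (1, 0, 0, 0) is a solution, and it is an isolated real solution: there is an open neighborhood of (1,0,0,0) in ℝ⁴ containing no other real solution of F. -/
/-- The real solution set of the polynomial system `F` in variables
`(X₂₂, X₂₃, Y₁, Y₂)`: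
`Y₁ − X₂₂/2 + 1/2 = 0`, `X₂₃ + X₂₂·Y₂ = 0`, `X₂₃·Y₂ − Y₁·(X₂₂/2 − 1/2) = 0`. -/
def Fsys : Set (ℝ × ℝ × ℝ × ℝ) :=
  {p | p.2.2.1 - p.1 / 2 + 1 / 2 = 0 ∧
       p.2.1 + p.1 * p.2.2.2 = 0 ∧
       p.2.1 * p.2.2.2 - p.2.2.1 * (p.1 / 2 - 1 / 2) = 0}

/-! Substituting `X₂₃ = -X₂₂ Y₂` and `X₂₂/2 - 1/2 = Y₁` into the third equation of `F` turns it
into `X₂₂ Y₂² + Y₁² = 0`. Where `X₂₂ > 0` this forces `Y₂ = Y₁ = 0`, and then the first two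
equations give `X₂₂ = 1`, `X₂₃ = 0`; so the open half-space `{X₂₂ > 0}` isolates `(1, 0, 0, 0)`. -/

lemma eq_zero_of_pos_mul_sq_add_sq_eq_zero {R : Type*} [Field R] [LinearOrder R]
    [IsStrictOrderedRing R] {a x y : R} (ha : 0 < a) (h : a * x ^ 2 + y ^ 2 = 0) :
    x = 0 ∧ y = 0 := by
  have hx : a * x ^ 2 = 0 ∧ y ^ 2 = 0 :=
    (add_eq_zero_iff_of_nonneg (by positivity) (sq_nonneg y)).1 h
  exact ⟨pow_eq_zero_iff two_ne_zero |>.1 ((mul_eq_zero.1 hx.1).resolve_left ha.ne'),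
    pow_eq_zero_iff two_ne_zero |>.1 hx.2⟩

lemma mul_sq_add_sq_eq_zero_of_mem_Fsys {p : ℝ × ℝ × ℝ × ℝ} (hp : p ∈ Fsys) :
    p.1 * p.2.2.2 ^ 2 + p.2.2.1 ^ 2 = 0 := by
  obtain ⟨h₁, h₂, h₃⟩ := hp
  have hX₂₃ : p.2.1 = -(p.1 * p.2.2.2) := by linarith
  have hY₁ : p.1 / 2 - 1 / 2 = p.2.2.1 := by linarith
  rw [hX₂₃, hY₁] at h₃
  linear_combination -h₃

lemma eq_of_mem_Fsys_of_pos {p : ℝ × ℝ × ℝ × ℝ} (hp : p ∈ Fsys) (hpos : 0 < p.1) :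
    p = (1, 0, 0, 0) := by
  obtain ⟨hY₂, hY₁⟩ :=
    eq_zero_of_pos_mul_sq_add_sq_eq_zero hpos (mul_sq_add_sq_eq_zero_of_mem_Fsys hp)
  obtain ⟨X₂₂, X₂₃, Y₁, Y₂⟩ := p
  obtain ⟨h₁, h₂, -⟩ := hp
  simp only at hY₁ hY₂ h₁ h₂
  subst hY₁ hY₂
  simp only [Prod.mk.injEq, and_true]
  constructor <;> linarith

/-- `(1, 0, 0, 0)` is a solution of the system `F`, and it is an isolated real
solution: some open neighborhood of it contains no other real solution. -/
theorem stmt19 :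
    ((1 : ℝ), (0 : ℝ), (0 : ℝ), (0 : ℝ)) ∈ Fsys ∧
      ∃ U : Set (ℝ × ℝ × ℝ × ℝ), IsOpen U ∧ ((1 : ℝ), (0 : ℝ), (0 : ℝ), (0 : ℝ)) ∈ U ∧
        ∀ p ∈ U ∩ Fsys, p = ((1 : ℝ), (0 : ℝ), (0 : ℝ), (0 : ℝ)) := by
  refine ⟨by norm_num [Fsys], {p | 0 < p.1}, isOpen_lt continuous_const continuous_fst,
    by norm_num, ?_⟩
  rintro p ⟨hpos, hp⟩
  exact eq_of_mem_Fsys_of_pos hp hpos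
end
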